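/- The map ν ↦ ∫_0^T { Q^ν_t (b ν_t + f(t)) − η (ν_t)^2 − 2a Q^ν_t (ν_t − m(t)) − φ (Q^ν_t)^2 } dt with Q^ν_t = ∫_0^t (ν_u − m(u)) du is strictly concave on L^2([0,T]), provided 2a − b ≥ 0, η > 0 and φ > 0. -/

import Mathlib

/-!
Mixing two strategies `ζ, ν` with weight `ρ`, the integrand of the objective gains, pointwise in
time, exactly `ρ (1 - ρ) (η w² + φ W² + (2a - b) W w)`, where `w = ζ - ν` and `W = ∫₀^· w`.
As `W` is absolutely continuous with `W' = w` a.e., `∫₀ᵀ W w = W(T)² / 2 ≥ 0`; so for `2a ≥ b` and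
`φ ≥ 0` the gain is at least `η ∫₀ᵀ w²`, which is positive because `ζ` and `ν` differ on a set of
positive measure.
-/

open MeasureTheory intervalIntegral

theorem integral_primitive_mul_self {w : ℝ → ℝ} {a b : ℝ}
    (hw : IntervalIntegrable w volume a b) :
    ∫ t in a..b, (∫ u in a..t, w u) * w t = (∫ u in a..b, w u) ^ 2 / 2 := by
  set W : ℝ → ℝ := fun t => ∫ u in a..t, w u
  have hW := hw.absolutelyContinuousOnInterval_intervalIntegral (c := a) Set.left_mem_uIcc
  have hderiv : ∀ᵐ t, t ∈ Set.uIoc a b →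
      deriv W t * W t + W t * deriv W t = 2 * (W t * w t) := by
    filter_upwards [hw.ae_hasDerivAt_integral] with t ht hmem
    rw [(ht (Set.uIoc_subset_uIcc hmem) a Set.left_mem_uIcc).deriv]
    ring
  have hFTC := hW.integral_deriv_mul_eq_sub hW
  rw [integral_congr_ae hderiv, intervalIntegral.integral_const_mul] at hFTC
  simp only [W, integral_same, ← sq] at hFTC
  linarith

theorem IntervalIntegrable.sq_sub {f g : ℝ → ℝ} {a b : ℝ}
    (hf : IntervalIntegrable f volume a b) (hg : IntervalIntegrable g volume a b)
    (hf2 : IntervalIntegrable (fun t => f t ^ 2) volume a b)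
    (hg2 : IntervalIntegrable (fun t => g t ^ 2) volume a b) :
    IntervalIntegrable (fun t => (f t - g t) ^ 2) volume a b := by
  rw [intervalIntegrable_iff] at *
  have hf' := (memLp_two_iff_integrable_sq hf.aestronglyMeasurable).2 hf2
  have hg' := (memLp_two_iff_integrable_sq hg.aestronglyMeasurable).2 hg2
  exact (memLp_two_iff_integrable_sq (hf.sub hg).aestronglyMeasurable).1 (hf'.sub hg')

theorem integral_sq_sub_pos {f g : ℝ → ℝ} {T : ℝ} (hT : 0 < T)
    (hfg : IntervalIntegrable (fun t => (f t - g t) ^ 2) volume 0 T)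
    (hne : 0 < volume {t ∈ Set.Ioc 0 T | f t ≠ g t}) :
    0 < ∫ t in (0:ℝ)..T, (f t - g t) ^ 2 := by
  rw [integral_pos_iff_support_of_nonneg_ae (.of_forall fun t => sq_nonneg _) hfg]
  refine ⟨hT, hne.trans_le (measure_mono fun t ⟨ht, hne⟩ => ⟨?_, ht⟩)⟩
  exact pow_ne_zero 2 (sub_ne_zero.2 hne)

noncomputable section

namespace BrokerObjective

variable (b η a φ : ℝ) (f m : ℝ → ℝ)

def inventory (v : ℝ → ℝ) (t : ℝ) : ℝ := ∫ u in (0:ℝ)..t, (v u - m u)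

def reward (q v t : ℝ) : ℝ :=
  q * (b * v + f t) - η * v ^ 2 - 2 * a * q * (v - m t) - φ * q ^ 2

def defect (w : ℝ → ℝ) (t : ℝ) : ℝ :=
  η * w t ^ 2 + φ * (∫ u in (0:ℝ)..t, w u) ^ 2 + (2 * a - b) * ((∫ u in (0:ℝ)..t, w u) * w t)

theorem reward_convex_combination (ρ q₁ q₂ v₁ v₂ t : ℝ) :
    reward b η a φ f m (ρ * q₁ + (1 - ρ) * q₂) (ρ * v₁ + (1 - ρ) * v₂) t =
      ρ * reward b η a φ f m q₁ v₁ t + (1 - ρ) * reward b η a φ f m q₂ v₂ t +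
        ρ * (1 - ρ) * (η * (v₁ - v₂) ^ 2 + φ * (q₁ - q₂) ^ 2 +
          (2 * a - b) * ((q₁ - q₂) * (v₁ - v₂))) := by
  unfold reward
  ring

variable {T : ℝ}

theorem continuousOn_inventory {v : ℝ → ℝ} (hv : IntervalIntegrable v volume 0 T)
    (hm : IntervalIntegrable m volume 0 T) :
    ContinuousOn (inventory m v) (Set.uIcc 0 T) :=
  continuousOn_primitive_interval' (hv.sub hm) Set.left_mem_uIcc

theorem intervalIntegrable_reward {v : ℝ → ℝ} (hf : IntervalIntegrable f volume 0 T)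
    (hm : IntervalIntegrable m volume 0 T) (hv : IntervalIntegrable v volume 0 T)
    (hv2 : IntervalIntegrable (fun t => v t ^ 2) volume 0 T) :
    IntervalIntegrable (fun t => reward b η a φ f m (inventory m v t) (v t) t) volume 0 T := by
  have hQ := continuousOn_inventory m hv hm
  exact ((((hv.const_mul b).add hf).continuousOn_mul hQ).sub (hv2.const_mul η)).sub
    ((hv.sub hm).continuousOn_mul (continuousOn_const.mul hQ)) |>.sub
    (continuousOn_const.mul (hQ.pow 2)).intervalIntegrable

theorem intervalIntegrable_defect {w : ℝ → ℝ} (hw : IntervalIntegrable w volume 0 T)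
    (hw2 : IntervalIntegrable (fun t => w t ^ 2) volume 0 T) :
    IntervalIntegrable (defect b η a φ w) volume 0 T := by
  have hW := continuousOn_primitive_interval' hw Set.left_mem_uIcc
  exact ((hw2.const_mul η).add ((hW.pow 2).intervalIntegrable.const_mul φ)).add
    ((hw.continuousOn_mul hW).const_mul (2 * a - b))

theorem integral_defect_pos (hη : 0 < η) (hφ : 0 ≤ φ) (hab : 0 ≤ 2 * a - b) {w : ℝ → ℝ}
    (hT : 0 ≤ T) (hw : IntervalIntegrable w volume 0 T)
    (hw2 : IntervalIntegrable (fun t => w t ^ 2) volume 0 T)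
    (hpos : 0 < ∫ t in (0:ℝ)..T, w t ^ 2) :
    0 < ∫ t in (0:ℝ)..T, defect b η a φ w t := by
  have hW := continuousOn_primitive_interval' hw Set.left_mem_uIcc
  have hW2 : IntervalIntegrable (fun t => (∫ u in (0:ℝ)..t, w u) ^ 2) volume 0 T :=
    (hW.pow 2).intervalIntegrable
  unfold defect
  rw [integral_add ((hw2.const_mul η).add (hW2.const_mul φ))
      ((hw.continuousOn_mul hW).const_mul (2 * a - b)),
    integral_add (hw2.const_mul η) (hW2.const_mul φ), intervalIntegral.integral_const_mul,
    intervalIntegral.integral_const_mul, intervalIntegral.integral_const_mul,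
    integral_primitive_mul_self hw]
  have hW2nn : 0 ≤ ∫ t in (0:ℝ)..T, (∫ u in (0:ℝ)..t, w u) ^ 2 :=
    integral_nonneg hT fun t _ => sq_nonneg _
  have hcross : 0 ≤ (2 * a - b) * ((∫ u in (0:ℝ)..T, w u) ^ 2 / 2) := by positivity
  linarith [mul_pos hη hpos, mul_nonneg hφ hW2nn]

theorem inventory_convex_combination {ζ ν : ℝ → ℝ} (hζ : IntervalIntegrable ζ volume 0 T)
    (hν : IntervalIntegrable ν volume 0 T) (hm : IntervalIntegrable m volume 0 T) (ρ : ℝ)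
    {t : ℝ} (ht : t ∈ Set.uIcc 0 T) :
    inventory m (fun u => ρ * ζ u + (1 - ρ) * ν u) t =
      ρ * inventory m ζ t + (1 - ρ) * inventory m ν t := by
  have hsub := Set.uIcc_subset_uIcc Set.left_mem_uIcc ht
  have hζm := (hζ.sub hm).mono_set hsub
  have hνm := (hν.sub hm).mono_set hsub
  rw [inventory, inventory, inventory, ← intervalIntegral.integral_const_mul,
    ← intervalIntegral.integral_const_mul, ← integral_add (hζm.const_mul ρ) (hνm.const_mul _)]
  exact integral_congr fun u _ => by ring

theorem inventory_sub_inventory {ζ ν : ℝ → ℝ} (hζ : IntervalIntegrable ζ volume 0 T)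
    (hν : IntervalIntegrable ν volume 0 T) (hm : IntervalIntegrable m volume 0 T)
    {t : ℝ} (ht : t ∈ Set.uIcc 0 T) :
    inventory m ζ t - inventory m ν t = ∫ u in (0:ℝ)..t, (ζ u - ν u) := by
  have hsub := Set.uIcc_subset_uIcc Set.left_mem_uIcc ht
  rw [inventory, inventory,
    ← integral_sub ((hζ.sub hm).mono_set hsub) ((hν.sub hm).mono_set hsub)]
  exact integral_congr fun u _ => by ring

theorem integral_reward_convex_combination {ζ ν : ℝ → ℝ} (hf : IntervalIntegrable f volume 0 T)
    (hm : IntervalIntegrable m volume 0 T) (hζ : IntervalIntegrable ζ volume 0 T)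
    (hν : IntervalIntegrable ν volume 0 T)
    (hζ2 : IntervalIntegrable (fun t => ζ t ^ 2) volume 0 T)
    (hν2 : IntervalIntegrable (fun t => ν t ^ 2) volume 0 T) (ρ : ℝ) :
    ∫ t in (0:ℝ)..T, reward b η a φ f m
        (inventory m (fun u => ρ * ζ u + (1 - ρ) * ν u) t) (ρ * ζ t + (1 - ρ) * ν t) t =
      ρ * (∫ t in (0:ℝ)..T, reward b η a φ f m (inventory m ζ t) (ζ t) t) +
        (1 - ρ) * (∫ t in (0:ℝ)..T, reward b η a φ f m (inventory m ν t) (ν t) t) +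
          ρ * (1 - ρ) * ∫ t in (0:ℝ)..T, defect b η a φ (fun u => ζ u - ν u) t := by
  have hζR := (intervalIntegrable_reward b η a φ f m hf hm hζ hζ2).const_mul ρ
  have hνR := (intervalIntegrable_reward b η a φ f m hf hm hν hν2).const_mul (1 - ρ)
  have hD := (intervalIntegrable_defect b η a φ (hζ.sub hν) (hζ.sq_sub hν hζ2 hν2)).const_mul
    (ρ * (1 - ρ))
  rw [← intervalIntegral.integral_const_mul, ← intervalIntegral.integral_const_mul,
    ← intervalIntegral.integral_const_mul, ← integral_add hζR hνR,
    ← integral_add (hζR.add hνR) hD]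
  refine integral_congr fun t ht => ?_
  simp only [inventory_convex_combination m hζ hν hm ρ ht, reward_convex_combination, defect,
    ← inventory_sub_inventory m hζ hν hm ht]

end BrokerObjective

end

theorem stmt_2_general (T b η a φ : ℝ) (hT : 0 < T) (hη : 0 < η) (hφ : 0 < φ)
    (hab : 0 ≤ 2 * a - b)
    (f m : ℝ → ℝ)
    (hf : IntervalIntegrable f volume 0 T)
    (hm : IntervalIntegrable m volume 0 T)
    (H : (ℝ → ℝ) → ℝ)
    (hH : ∀ v : ℝ → ℝ, H v =
      ∫ t in (0:ℝ)..T,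
        ((∫ u in (0:ℝ)..t, (v u - m u)) * (b * v t + f t) - η * (v t) ^ 2
          - 2 * a * (∫ u in (0:ℝ)..t, (v u - m u)) * (v t - m t)
          - φ * (∫ u in (0:ℝ)..t, (v u - m u)) ^ 2))
    (ζ ν : ℝ → ℝ)
    (hζ : IntervalIntegrable ζ volume 0 T)
    (hν : IntervalIntegrable ν volume 0 T)
    (hζ2 : IntervalIntegrable (fun t => (ζ t) ^ 2) volume 0 T)
    (hν2 : IntervalIntegrable (fun t => (ν t) ^ 2) volume 0 T)
    (hdiff : 0 < volume {t ∈ Set.Ioc 0 T | ζ t ≠ ν t})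
    (ρ : ℝ) (hρ : ρ ∈ Set.Ioo (0:ℝ) 1) :
    ρ * H ζ + (1 - ρ) * H ν < H (fun t => ρ * ζ t + (1 - ρ) * ν t) := by
  obtain ⟨hρ0, hρ1⟩ := hρ
  have hH' : ∀ v, H v = ∫ t in (0:ℝ)..T,
      BrokerObjective.reward b η a φ f m (BrokerObjective.inventory m v t) (v t) t := hH
  have hw2 := hζ.sq_sub hν hζ2 hν2
  have hdefect := BrokerObjective.integral_defect_pos b η a φ hη hφ.le hab hT.le (hζ.sub hν)
    hw2 (integral_sq_sub_pos hT hw2 hdiff)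
  rw [hH', hH', hH',
    BrokerObjective.integral_reward_convex_combination b η a φ f m hf hm hζ hν hζ2 hν2 ρ]
  have hmix : 0 < ρ * (1 - ρ) := mul_pos hρ0 (sub_pos.2 hρ1)
  linarith [mul_pos hmix hdefect]

/-- Strict concavity of the broker's (pathwise) objective
`H(ν) = ∫_0^T { Q^ν_t (b ν_t + f(t)) − η ν_t² − 2a Q^ν_t (ν_t − m(t)) − φ (Q^ν_t)² } dt`
with `Q^ν_t = ∫_0^t (ν_u − m(u)) du`, provided `2a − b ≥ 0`, `η > 0`, `φ > 0`. -/
theorem stmt_2 (T b η a φ : ℝ) (hT : 0 < T) (hη : 0 < η) (ha : 0 < a) (hφ : 0 < φ)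
    (hab : 0 ≤ 2 * a - b)
    (f m : ℝ → ℝ)
    (hf : IntervalIntegrable f volume 0 T)
    (hm : IntervalIntegrable m volume 0 T)
    (hm2 : IntervalIntegrable (fun t => (m t) ^ 2) volume 0 T)
    (H : (ℝ → ℝ) → ℝ)
    (hH : ∀ v : ℝ → ℝ, H v =
      ∫ t in (0:ℝ)..T,
        ((∫ u in (0:ℝ)..t, (v u - m u)) * (b * v t + f t) - η * (v t) ^ 2
          - 2 * a * (∫ u in (0:ℝ)..t, (v u - m u)) * (v t - m t)
          - φ * (∫ u in (0:ℝ)..t, (v u - m u)) ^ 2))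
    (ζ ν : ℝ → ℝ)
    (hζ : IntervalIntegrable ζ volume 0 T)
    (hν : IntervalIntegrable ν volume 0 T)
    (hζ2 : IntervalIntegrable (fun t => (ζ t) ^ 2) volume 0 T)
    (hν2 : IntervalIntegrable (fun t => (ν t) ^ 2) volume 0 T)
    (hdiff : 0 < volume {t ∈ Set.Ioc 0 T | ζ t ≠ ν t})
    (ρ : ℝ) (hρ : ρ ∈ Set.Ioo (0:ℝ) 1) :
    ρ * H ζ + (1 - ρ) * H ν < H (fun t => ρ * ζ t + (1 - ρ) * ν t) :=
  stmt_2_general T b η a φ hT hη hφ hab f m hf hm H hH ζ ν hζ hν hζ2 hν2 hdiff ρ hρ
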